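/- arXiv:2304.04619 — 2 statements merged into one kernel-verified Lean document; each statement's English description precedes it below -/
import Mathlib

section
/- Let n = p_1^{k_1}⋯p_r^{k_r} with p_1, …, p_r distinct primes and k_i ≥ 1. Then the condition number of the twisted Vandermonde matrix satisfies Cond(TV_{K_n}) = φ(n) · (√2)^r · √(∏_{i=1}^r (1 − 1/p_i)). -/
/-- The Frobenius norm of a complex matrix: `√(∑_{i,j} |A_{ij}|²)`. -/
noncomputable def frobNorm {m n : Type*} [Fintype m] [Fintype n]
    (A : Matrix m n ℂ) : ℝ :=
  Real.sqrt (∑ i, ∑ j, ‖A i j‖ ^ 2)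

/-- The condition number `Cond(A) = ‖A‖ · ‖A⁻¹‖` (Frobenius norm). -/
noncomputable def condNum {n : Type*} [Fintype n] [DecidableEq n]
    (A : Matrix n n ℂ) : ℝ :=
  frobNorm A * frobNorm A⁻¹

/-- The iterated Kronecker product of the matrices `V i`, realized on the
canonical index set `∀ i, Fin (t i)`: its `(f, g)` entry is `∏ i, (V i) (f i) (g i)`. -/
noncomputable def kronProd {r : ℕ} {t : Fin r → ℕ}
    (V : ∀ i, Matrix (Fin (t i)) (Fin (t i)) ℂ) :
    Matrix (∀ i, Fin (t i)) (∀ i, Fin (t i)) ℂ :=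
  Matrix.of fun f g => ∏ i, V i (f i) (g i)

/-!
Kronecker products are compatible with products, inverses and (entrywise) the Frobenius norm,
so `Cond(TV_{K_n}) = ∏ Cond(V_{Φ_{p^k}})` and it suffices to treat one prime power `p ^ k`.
Put `q = p ^ (k - 1)`, so that `Φ_{p^k}(X) = (X ^ (p q) - 1) / (X ^ q - 1)`. The inverse of its
Vandermonde matrix is explicit: the entry at `(b, a)` is `x⁻¹ ^ b (1 - x ^ (q (⌊b/q⌋ + 1))) / (p q)`
with `x = ζ a`. These entries vanish for `(p - 1) q ≤ b < p q`, so all sums over `b` may be taken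
over a full period `p q`, where they reduce to geometric sums of roots of unity. Every entry of
`V` has modulus one, so `‖V‖ = φ(p^k)`, and every column of `V⁻¹` has squared norm `2 / p^k`,
so `‖V⁻¹‖² = 2 φ(p^k) / p^k = 2 (1 - 1/p)`.
-/

open Finset Matrix Function

section Kronecker

variable {r : ℕ} {t : Fin r → ℕ}

theorem kronProd_mul (V W : ∀ i, Matrix (Fin (t i)) (Fin (t i)) ℂ) :
    kronProd V * kronProd W = kronProd fun i => V i * W i := by
  ext f g
  simp only [kronProd, mul_apply, of_apply, Fintype.prod_sum, prod_mul_distrib]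

theorem kronProd_one : kronProd (fun i => (1 : Matrix (Fin (t i)) (Fin (t i)) ℂ)) = 1 := by
  ext f g
  simp [kronProd, one_apply, prod_boole, funext_iff]

theorem kronProd_inv (V : ∀ i, Matrix (Fin (t i)) (Fin (t i)) ℂ) (hV : ∀ i, IsUnit (V i).det) :
    (kronProd V)⁻¹ = kronProd fun i => (V i)⁻¹ := by
  refine inv_eq_right_inv ?_
  rw [kronProd_mul, ← kronProd_one]
  exact congrArg kronProd (funext fun i => mul_nonsing_inv _ (hV i))

theorem frobNorm_kronProd (V : ∀ i, Matrix (Fin (t i)) (Fin (t i)) ℂ) :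
    frobNorm (kronProd V) = ∏ i, frobNorm (V i) := by
  simp only [frobNorm]
  rw [← Real.sqrt_prod _ fun i _ => by positivity]
  simp only [kronProd, of_apply, norm_prod, ← prod_pow, Fintype.prod_sum]

theorem condNum_kronProd (V : ∀ i, Matrix (Fin (t i)) (Fin (t i)) ℂ)
    (hV : ∀ i, IsUnit (V i).det) : condNum (kronProd V) = ∏ i, condNum (V i) := by
  simp only [condNum, kronProd_inv V hV, frobNorm_kronProd, prod_mul_distrib]

end Kronecker

theorem sum_range_mul_div_mod {M : Type*} [AddCommMonoid M] (p q : ℕ) (f : ℕ → ℕ → M) :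
    ∑ b ∈ range (p * q), f (b / q) (b % q) = ∑ c ∈ range p, ∑ d ∈ range q, f c d := by
  induction p with
  | zero => simp
  | succ p ih =>
    rw [Nat.succ_mul, sum_range_add, ih, sum_range_succ]
    congr 1
    refine sum_congr rfl fun d hd => ?_
    have hd : d < q := mem_range.1 hd
    rw [Nat.div_eq_of_lt_le (k := p) (by lia) (by lia), Nat.mul_add_mod_self_right,
      Nat.mod_eq_of_lt hd]

section Cyclotomic

variable {p q : ℕ}

/-- For `b < (p - 1) * q` this is the coefficient of `X ^ b` in the Lagrange basis polynomial at
the root `x` of `(X ^ (p * q) - 1) / (X ^ q - 1)`. -/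
noncomputable def lagrangeCoeff (p q : ℕ) (x : ℂ) (b : ℕ) : ℂ :=
  x⁻¹ ^ b * (1 - x ^ (q * (b / q + 1))) / (p * q : ℕ)

theorem lagrangeCoeff_eq_zero {x : ℂ} {b : ℕ} (hx : x ^ (p * q) = 1) (hb : (p - 1) * q ≤ b)
    (hb' : b < p * q) : lagrangeCoeff p q x b = 0 := by
  have hp : 1 ≤ p := Nat.pos_of_ne_zero (by rintro rfl; simp at hb')
  have hdiv : b / q = p - 1 := Nat.div_eq_of_lt_le hb (by rwa [Nat.sub_add_cancel hp])
  rw [lagrangeCoeff, hdiv, Nat.sub_add_cancel hp, mul_comm q, hx, sub_self, mul_zero, zero_div]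

theorem sum_range_lagrangeCoeff {M : Type*} [AddCommMonoid M] {x : ℂ} (g : ℕ → ℂ → M)
    (hg : ∀ b, g b 0 = 0) (hx : x ^ (p * q) = 1) :
    ∑ b ∈ range ((p - 1) * q), g b (lagrangeCoeff p q x b) =
      ∑ b ∈ range (p * q), g b (lagrangeCoeff p q x b) :=
  sum_subset (range_subset_range.2 (Nat.mul_le_mul_right _ (Nat.sub_le _ _))) fun b hb hb' => by
    rw [lagrangeCoeff_eq_zero hx (not_lt.1 (mt mem_range.2 hb')) (mem_range.1 hb), hg]

theorem sum_pow_mul_lagrangeCoeff {x y : ℂ} (hp : 0 < p) (hx : x ^ (p * q) = 1)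
    (hy : y ^ (p * q) = 1) (hyq : y ^ q ≠ 1) :
    ∑ b ∈ range (p * q), y ^ b * lagrangeCoeff p q x b = if y = x then 1 else 0 := by
  have hq : q ≠ 0 := by rintro rfl; exact hyq (pow_zero y)
  have hx0 : x ≠ 0 := by rintro rfl; simp [hp.ne', hq] at hx
  -- With `b = q ⌊b/q⌋ + b % q`, the second part splits into a product of geometric sums, one of
  -- them over the nontrivial `p`-th root of unity `y ^ q`.
  have hterm b : y ^ b * lagrangeCoeff p q x b =
      ((y * x⁻¹) ^ b - x ^ q * ((y ^ q) ^ (b / q) * (y * x⁻¹) ^ (b % q))) / (p * q : ℕ) := by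
    rw [lagrangeCoeff]
    have hb := Nat.div_add_mod b q
    generalize b / q = c, b % q = d at hb ⊢
    subst hb
    simp only [mul_pow, inv_pow, pow_add, pow_mul, mul_add, mul_one]
    field_simp
  have hsplit := sum_range_mul_div_mod p q fun c d => (y ^ q) ^ c * (y * x⁻¹) ^ d
  beta_reduce at hsplit
  have hyqp : (y ^ q) ^ p = 1 := by rw [← pow_mul, mul_comm, hy]
  simp_rw [hterm, ← sum_div, sum_sub_distrib, ← mul_sum, hsplit, ← sum_mul_sum,
    geom_sum_eq hyq, hyqp, sub_self, zero_div, zero_mul, mul_zero, sub_zero]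
  split_ifs with hyx
  · simp [hyx, mul_inv_cancel₀ hx0, hp.ne', hq]
  · have hω : y * x⁻¹ ≠ 1 := mt (mul_inv_eq_one₀ hx0).1 hyx
    rw [geom_sum_eq hω, mul_pow, inv_pow, hx, hy, inv_one, mul_one, sub_self, zero_div, zero_div]

theorem sum_norm_sq_lagrangeCoeff {x : ℂ} (hp : 0 < p) (hx : x ^ (p * q) = 1) (hxq : x ^ q ≠ 1) :
    ∑ b ∈ range (p * q), ‖lagrangeCoeff p q x b‖ ^ 2 = 2 / (p * q : ℕ) := by
  have hq : q ≠ 0 := by rintro rfl; exact hxq (pow_zero x)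
  have hx1 : ‖x‖ = 1 := Complex.norm_eq_one_of_pow_eq_one hx (by positivity)
  have hβ c : ‖(x ^ q) ^ c‖ = 1 := by rw [norm_pow, norm_pow, hx1, one_pow, one_pow]
  have hβsum : ∑ c ∈ range p, (x ^ q) ^ (c + 1) = 0 := by
    have hxqp : (x ^ q) ^ p = 1 := by rw [← pow_mul, mul_comm, hx]
    simp_rw [pow_succ, ← sum_mul, geom_sum_eq hxq, hxqp, sub_self, zero_div, zero_mul]
  have hterm b : ‖lagrangeCoeff p q x b‖ ^ 2 =
      2 * (1 - ((x ^ q) ^ (b / q + 1)).re) / ((p * q : ℕ) : ℝ) ^ 2 := by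
    rw [lagrangeCoeff, norm_div, norm_mul, norm_pow, norm_inv, hx1, inv_one, one_pow, one_mul,
      norm_sub_rev, pow_mul, Complex.norm_natCast, div_pow,
      Complex.norm_sub_one_sq_eq_of_norm_eq_one (hβ _)]
  simp_rw [hterm]
  rw [sum_range_mul_div_mod p q fun c _ =>
    2 * (1 - ((x ^ q) ^ (c + 1)).re) / ((p * q : ℕ) : ℝ) ^ 2]
  simp only [sum_const, card_range, nsmul_eq_mul, ← mul_sum, ← sum_div, sum_sub_distrib,
    ← Complex.re_sum, hβsum, Complex.zero_re]
  field_simp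
  push_cast
  ring

noncomputable def cycloVandermondeInv (p q : ℕ) {m : ℕ} (ζ : Fin m → ℂ) :
    Matrix (Fin m) (Fin m) ℂ :=
  of fun b a => lagrangeCoeff p q (ζ a) b

variable {m : ℕ} {ζ : Fin m → ℂ}

theorem vandermonde_mul_cycloVandermondeInv (hp : 0 < p) (hm : m = (p - 1) * q)
    (hζ : ∀ a, ζ a ^ (p * q) = 1) (hζq : ∀ a, ζ a ^ q ≠ 1) (hinj : Injective ζ) :
    vandermonde ζ * cycloVandermondeInv p q ζ = 1 := by
  subst hm
  ext a a'
  simp only [mul_apply, vandermonde_apply, cycloVandermondeInv, of_apply]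
  rw [Fin.sum_univ_eq_sum_range (fun b => ζ a ^ b * lagrangeCoeff p q (ζ a') b),
    sum_range_lagrangeCoeff (fun b z => ζ a ^ b * z) (fun _ => mul_zero _) (hζ a'),
    sum_pow_mul_lagrangeCoeff hp (hζ a') (hζ a) (hζq a), one_apply]
  exact if_congr hinj.eq_iff rfl rfl

theorem frobNorm_cycloVandermondeInv (hp : 0 < p) (hq : 0 < q) (hm : m = (p - 1) * q)
    (hζ : ∀ a, ζ a ^ (p * q) = 1) (hζq : ∀ a, ζ a ^ q ≠ 1) :
    frobNorm (cycloVandermondeInv p q ζ) = √(2 * (1 - 1 / p)) := by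
  subst hm
  have hcol a : ∑ b : Fin ((p - 1) * q), ‖lagrangeCoeff p q (ζ a) b‖ ^ 2 = 2 / (p * q : ℕ) := by
    rw [Fin.sum_univ_eq_sum_range (fun b => ‖lagrangeCoeff p q (ζ a) b‖ ^ 2),
      sum_range_lagrangeCoeff (fun _ z => ‖z‖ ^ 2) (fun _ => by simp) (hζ a),
      sum_norm_sq_lagrangeCoeff hp (hζ a) (hζq a)]
  rw [frobNorm, sum_comm]
  simp only [cycloVandermondeInv, of_apply, hcol, sum_const, card_univ, Fintype.card_fin,
    nsmul_eq_mul]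
  congr 1
  push_cast [Nat.cast_sub hp]
  field_simp

theorem frobNorm_vandermonde_of_norm_eq_one (hζ : ∀ a, ‖ζ a‖ = 1) :
    frobNorm (vandermonde ζ) = m := by
  simp [frobNorm, vandermonde_apply, hζ]

theorem condNum_vandermonde_of_pow_eq_one (hp : 0 < p) (hq : 0 < q) (hm : m = (p - 1) * q)
    (hζ : ∀ a, ζ a ^ (p * q) = 1) (hζq : ∀ a, ζ a ^ q ≠ 1) (hinj : Injective ζ) :
    condNum (vandermonde ζ) = m * √(2 * (1 - 1 / p)) := by
  rw [condNum, inv_eq_right_inv (vandermonde_mul_cycloVandermondeInv hp hm hζ hζq hinj),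
    frobNorm_cycloVandermondeInv hp hq hm hζ hζq, frobNorm_vandermonde_of_norm_eq_one
      fun a => Complex.norm_eq_one_of_pow_eq_one (hζ a) (by positivity)]

end Cyclotomic

theorem condNum_vandermonde_of_isPrimitiveRoot {p k : ℕ} (hp : p.Prime) (hk : 0 < k)
    {ζ : Fin (p ^ k).totient → ℂ} (hζ : ∀ a, IsPrimitiveRoot (ζ a) (p ^ k))
    (hinj : Injective ζ) :
    condNum (vandermonde ζ) = (p ^ k).totient * √(2 * (1 - 1 / p)) := by
  obtain ⟨j, rfl⟩ : ∃ j, k = j + 1 := ⟨k - 1, by lia⟩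
  refine condNum_vandermonde_of_pow_eq_one hp.pos (pow_pos hp.pos j)
    (by rw [Nat.totient_prime_pow_succ hp, mul_comm]) (fun a => ?_) (fun a => ?_) hinj
  · rw [← pow_succ']
    exact (hζ a).pow_eq_one
  · exact (hζ a).pow_ne_one_of_pos_of_lt (pow_pos hp.pos j).ne'
      (pow_lt_pow_right₀ hp.one_lt (lt_add_one j))

theorem Nat.totient_prod {ι : Type*} (s : Finset ι) (g : ι → ℕ)
    (hs : (s : Set ι).Pairwise (Nat.Coprime on g)) :
    (∏ i ∈ s, g i).totient = ∏ i ∈ s, (g i).totient :=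
  ArithmeticFunction.IsMultiplicative.map_prod (f := ⟨Nat.totient, Nat.totient_zero⟩) g
    ⟨Nat.totient_one, Nat.totient_mul⟩ s hs

theorem condNum_twisted_vandermonde (r : ℕ) (p k : Fin r → ℕ)
    (hp : ∀ i, Nat.Prime (p i)) (hinj : Function.Injective p)
    (hk : ∀ i, 1 ≤ k i) (n : ℕ) (hn : n = ∏ i, p i ^ k i)
    (ζ : ∀ i, Fin (p i ^ k i).totient → ℂ)
    (hζ : ∀ i a, IsPrimitiveRoot (ζ i a) (p i ^ k i))
    (hζinj : ∀ i, Function.Injective (ζ i)) :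
    condNum (kronProd fun i =>
        Matrix.of fun a b : Fin (p i ^ k i).totient => ζ i a ^ (b : ℕ)) =
      (n.totient : ℝ) * Real.sqrt 2 ^ r *
        Real.sqrt (∏ i, (1 - 1 / (p i : ℝ))) := by
  have htot : n.totient = ∏ i, (p i ^ k i).totient :=
    hn ▸ Nat.totient_prod _ _ fun i _ j _ hij =>
      ((Nat.coprime_primes (hp i) (hp j)).2 (hinj.ne hij)).pow _ _
  have hfactor i : (0 : ℝ) ≤ 1 - 1 / p i :=
    sub_nonneg.2 (div_le_one_of_le₀ (by exact_mod_cast (hp i).one_lt.le) (by positivity))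
  calc condNum (kronProd fun i => vandermonde (ζ i))
      = ∏ i, condNum (vandermonde (ζ i)) :=
        condNum_kronProd _ fun i => (det_vandermonde_ne_zero_iff.2 (hζinj i)).isUnit
    _ = ∏ i, ((p i ^ k i).totient * (√2 * √(1 - 1 / p i))) := by
        simp_rw [condNum_vandermonde_of_isPrimitiveRoot (hp _) (hk _) (hζ _) (hζinj _),
          Real.sqrt_mul zero_le_two]
    _ = _ := by
        rw [prod_mul_distrib, prod_mul_distrib, prod_const, card_univ, Fintype.card_fin,
          ← Real.sqrt_prod _ fun i _ => hfactor i, htot, Nat.cast_prod, mul_assoc]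
end

section
/- Let n = p^k be a prime power with n ≥ 2, and set m = φ(n). Then the condition number of the cyclotomic Vandermonde matrix satisfies Cond(V_{Φ_n}) ≤ 4m². -/
open Finset Polynomial Matrix
open scoped Nat

theorem frobNorm_le_of_norm_le {m n : Type*} [Fintype m] [Fintype n] {A : Matrix m n ℂ} {c : ℝ}
    (h : ∀ i j, ‖A i j‖ ≤ c) : frobNorm A ≤ √(Fintype.card m * Fintype.card n) * c := by
  rcases isEmpty_or_nonempty m with hm | ⟨⟨i⟩⟩
  · simp [frobNorm]
  rcases isEmpty_or_nonempty n with hn | ⟨⟨j⟩⟩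
  · simp [frobNorm]
  have hc : 0 ≤ c := (norm_nonneg _).trans (h i j)
  rw [frobNorm, ← Real.sqrt_sq hc, ← Real.sqrt_mul (by positivity)]
  gcongr
  calc ∑ i, ∑ j, ‖A i j‖ ^ 2 ≤ ∑ _i : m, ∑ _j : n, c ^ 2 := by gcongr with i _ j; exact h i j
    _ = _ := by simp [mul_assoc]

theorem Matrix.norm_mul_apply_le {α l m n : Type*} [SeminormedRing α] [Fintype m]
    {A : Matrix l m α} {B : Matrix m n α} {a b : ℝ}
    (hA : ∀ i j, ‖A i j‖ ≤ a) (hB : ∀ i j, ‖B i j‖ ≤ b) (i : l) (k : n) :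
    ‖(A * B) i k‖ ≤ Fintype.card m * (a * b) := by
  rw [mul_apply, ← nsmul_eq_mul, ← card_univ]
  refine (norm_sum_le _ _).trans (sum_le_card_nsmul _ _ _ fun j _ => ?_)
  exact (norm_mul_le _ _).trans
    (mul_le_mul (hA i j) (hB j k) (norm_nonneg _) ((norm_nonneg _).trans (hA i j)))

theorem IsPrimitiveRoot.sum_nthRootsFinset_zpow {K : Type*} [Field K] {N : ℕ} {ω : K}
    (hω : IsPrimitiveRoot ω N) (t : ℤ) :
    ∑ z ∈ nthRootsFinset N (1 : K), z ^ t = if (N : ℤ) ∣ t then (N : K) else 0 := by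
  classical
  obtain rfl | hN := N.eq_zero_or_pos
  · simp
  have himage : (range N).image (ω ^ ·) = nthRootsFinset N (1 : K) := by
    refine eq_of_subset_of_card_le (fun z hz => ?_) ?_
    · obtain ⟨a, -, rfl⟩ := mem_image.1 hz
      rw [Polynomial.mem_nthRootsFinset hN, ← pow_mul, mul_comm, pow_mul, hω.pow_eq_one, one_pow]
    · rw [hω.card_nthRootsFinset, card_image_of_injOn hω.injOn_pow, card_range]
  have hcomm : ∀ a : ℕ, (ω ^ a) ^ t = (ω ^ t) ^ a := fun a => by
    rw [← zpow_natCast, ← _root_.zpow_mul, mul_comm, _root_.zpow_mul, zpow_natCast]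
  rw [← himage, sum_image fun a ha b hb => hω.injOn_pow ha hb]
  simp only [hcomm]
  split_ifs with h
  · simp [(hω.zpow_eq_one_iff_dvd t).2 h]
  · have hpow : (ω ^ t) ^ N = 1 := by
      rw [← zpow_natCast, ← _root_.zpow_mul, mul_comm, _root_.zpow_mul, zpow_natCast,
        hω.pow_eq_one, _root_.one_zpow]
    rw [geom_sum_eq (mt (hω.zpow_eq_one_iff_dvd t).1 h), hpow, sub_self, zero_div]

theorem primitiveRoots_prime_pow_succ {K : Type*} [CommRing K] [IsDomain K] [DecidableEq K]
    {p : ℕ} (hp : p.Prime) (k : ℕ) :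
    primitiveRoots (p ^ (k + 1)) K =
      nthRootsFinset (p ^ (k + 1)) (1 : K) \ nthRootsFinset (p ^ k) (1 : K) := by
  have := Fact.mk hp
  have hp0 := hp.pos
  ext z
  rw [mem_primitiveRoots (by positivity), mem_sdiff, mem_nthRootsFinset (by positivity),
    mem_nthRootsFinset (by positivity), IsPrimitiveRoot.iff_orderOf]
  refine ⟨fun h => ⟨h ▸ pow_orderOf_eq_one z, fun hz => ?_⟩,
    fun h => orderOf_eq_prime_pow h.2 h.1⟩
  exact absurd (orderOf_le_of_pow_eq_one (by positivity) hz)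
    (h ▸ (Nat.pow_lt_pow_right hp.one_lt k.lt_succ_self).not_ge)

theorem IsPrimitiveRoot.sum_primitiveRoots_prime_pow_zpow {K : Type*} [Field K] [DecidableEq K]
    {p k : ℕ} {ω : K} (hp : p.Prime) (hω : IsPrimitiveRoot ω (p ^ (k + 1))) (t : ℤ) :
    ∑ z ∈ primitiveRoots (p ^ (k + 1)) K, z ^ t =
      (if (p : ℤ) ^ (k + 1) ∣ t then (p : K) ^ (k + 1) else 0) -
        if (p : ℤ) ^ k ∣ t then (p : K) ^ k else 0 := by
  have hp0 := hp.pos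
  have hsub : nthRootsFinset (p ^ k) (1 : K) ⊆ nthRootsFinset (p ^ (k + 1)) 1 := fun z hz => by
    rw [Polynomial.mem_nthRootsFinset (by positivity)] at hz ⊢
    rw [pow_succ, pow_mul, hz, one_pow]
  rw [primitiveRoots_prime_pow_succ hp, sum_sdiff_eq_sub hsub, hω.sum_nthRootsFinset_zpow,
    (hω.pow (by positivity) (pow_succ' p k)).sum_nthRootsFinset_zpow]
  push_cast
  rfl

theorem sum_comp_eq_sum_primitiveRoots {K M : Type*} [CommRing K] [IsDomain K] [AddCommMonoid M]
    {n : ℕ} {ζ : Fin (φ n) → K} (hζ : ∀ i, IsPrimitiveRoot (ζ i) n) (hinj : ζ.Injective)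
    (f : K → M) : ∑ i, f (ζ i) = ∑ z ∈ primitiveRoots n K, f z := by
  classical
  obtain rfl | hn := n.eq_zero_or_pos
  · have : IsEmpty (Fin (φ 0)) := by rw [Nat.totient_zero]; infer_instance
    rw [univ_eq_empty, sum_empty, primitiveRoots_zero, sum_empty]
  have himage : univ.image ζ = primitiveRoots n K := by
    refine eq_of_subset_of_card_le (fun z hz => ?_) ?_
    · obtain ⟨i, -, rfl⟩ := mem_image.1 hz
      exact (mem_primitiveRoots hn).2 (hζ i)
    · rw [(hζ ⟨0, Nat.totient_pos.2 hn⟩).card_primitiveRoots, card_image_of_injective _ hinj,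
        card_univ, Fintype.card_fin]
  rw [← himage, sum_image fun i _ j _ h => hinj h]

def modEqMatrix (R : Type*) [Zero R] [One R] (q m : ℕ) : Matrix (Fin m) (Fin m) R :=
  of fun j j' => if (j : ℕ) ≡ j' [MOD q] then 1 else 0

theorem modEqMatrix_mul_self (R : Type*) [NonAssocSemiring R] {q m c : ℕ} (hm : m = q * c) :
    modEqMatrix R q m * modEqMatrix R q m = c • modEqMatrix R q m := by
  subst hm
  obtain rfl | hq := q.eq_zero_or_pos
  · ext j
    exact absurd j.2 (by simp)
  have hcount (r : ℕ) : ∑ j : Fin (q * c), (if (j : ℕ) ≡ r [MOD q] then (1 : R) else 0) = c := by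
    rw [Fin.sum_univ_eq_sum_range (fun j => if j ≡ r [MOD q] then (1 : R) else 0), sum_boole,
      ← Nat.count_eq_card_filter_range, Nat.count_modEq_card _ hq, Nat.mul_mod_right,
      Nat.mul_div_cancel_left _ hq]
    simp
  ext j j''
  have hterm (j' : Fin (q * c)) :
      (if (j' : ℕ) ≡ j'' [MOD q] then (if (j : ℕ) ≡ j' [MOD q] then (1 : R) else 0) else 0) =
        if (j : ℕ) ≡ j'' [MOD q] then (if (j' : ℕ) ≡ j'' [MOD q] then 1 else 0) else 0 := by
    by_cases h' : (j' : ℕ) ≡ j'' [MOD q]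
    · simp only [h', if_true]
      exact if_congr ⟨fun h => h.trans h', fun h => h.trans h'.symm⟩ rfl rfl
    · simp [h']
  simp only [mul_apply, modEqMatrix, of_apply, Matrix.smul_apply, mul_ite, mul_one, mul_zero]
  rw [sum_congr rfl fun j' _ => hterm j']
  split_ifs
  · rw [hcount, nsmul_one]
  · simp

theorem one_add_mul_smul_one_sub_smul {R A : Type*} [CommRing R] [Ring A] [Algebra R A] {e : A}
    {a b : R} (he : e * e = (a - 1) • e) : (1 + e) * ((a * b) • 1 - b • e) = (a * b) • 1 := by
  simp only [add_mul, one_mul, mul_sub, mul_smul_comm, mul_one, he]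
  module

section PrimePower

variable {p k : ℕ} {ζ : Fin (φ (p ^ (k + 1))) → ℂ}

theorem conjTranspose_vandermonde_mul_self_prime_pow (hp : p.Prime)
    (hζ : ∀ i, IsPrimitiveRoot (ζ i) (p ^ (k + 1))) (hinj : ζ.Injective) :
    (vandermonde ζ)ᴴ * vandermonde ζ =
      (p : ℂ) ^ (k + 1) • 1 - (p : ℂ) ^ k • modEqMatrix ℂ (p ^ k) (φ (p ^ (k + 1))) := by
  have hn : p ^ (k + 1) ≠ 0 := pow_ne_zero _ hp.ne_zero
  have hentry (i : Fin (φ (p ^ (k + 1)))) (j j' : ℕ) :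
      star (ζ i ^ j) * ζ i ^ j' = ζ i ^ ((j' : ℤ) - j) := by
    rw [star_pow, Complex.star_def, ← Complex.inv_eq_conj ((hζ i).norm'_eq_one hn),
      zpow_sub₀ ((hζ i).ne_zero hn), zpow_natCast, zpow_natCast, inv_pow, div_eq_inv_mul]
  ext j j'
  simp only [mul_apply, conjTranspose_apply, vandermonde_apply, hentry]
  rw [sum_comp_eq_sum_primitiveRoots hζ hinj (· ^ ((j' : ℤ) - j)),
    (Complex.isPrimitiveRoot_exp _ hn).sum_primitiveRoots_prime_pow_zpow hp]
  have hlt (j : Fin (φ (p ^ (k + 1)))) : (j : ℕ) < p ^ (k + 1) :=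
    j.2.trans (Nat.totient_lt _ (Nat.one_lt_pow k.succ_ne_zero hp.one_lt))
  have hdvd_n : (p : ℤ) ^ (k + 1) ∣ (j' : ℤ) - j ↔ j = j' := by
    rw [← Nat.cast_pow, ← Nat.modEq_iff_dvd]
    exact ⟨fun h => Fin.ext (h.eq_of_lt_of_lt (hlt j) (hlt j')), fun h => h ▸ rfl⟩
  have hdvd_q : (p : ℤ) ^ k ∣ (j' : ℤ) - j ↔ (j : ℕ) ≡ j' [MOD p ^ k] := by
    rw [← Nat.cast_pow, ← Nat.modEq_iff_dvd]
  simp only [hdvd_n, hdvd_q, Matrix.sub_apply, Matrix.smul_apply, Matrix.one_apply, modEqMatrix,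
    of_apply]
  split_ifs <;> simp

theorem inv_vandermonde_prime_pow (hp : p.Prime)
    (hζ : ∀ i, IsPrimitiveRoot (ζ i) (p ^ (k + 1))) (hinj : ζ.Injective) :
    (vandermonde ζ)⁻¹ = ((p : ℂ) ^ (k + 1))⁻¹ •
      ((1 + modEqMatrix ℂ (p ^ k) (φ (p ^ (k + 1)))) * (vandermonde ζ)ᴴ) := by
  have hsq := modEqMatrix_mul_self ℂ (Nat.totient_prime_pow_succ hp k)
  rw [← Nat.cast_smul_eq_nsmul ℂ, Nat.cast_pred hp.pos] at hsq
  refine inv_eq_left_inv ?_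
  rw [smul_mul_assoc, Matrix.mul_assoc, conjTranspose_vandermonde_mul_self_prime_pow hp hζ hinj,
    show (p : ℂ) ^ (k + 1) = p * p ^ k from pow_succ' _ _, one_add_mul_smul_one_sub_smul hsq,
    smul_smul, inv_mul_cancel₀ (by simp [hp.ne_zero]), one_smul]

theorem norm_inv_vandermonde_prime_pow_apply_le (hp : p.Prime)
    (hζ : ∀ i, IsPrimitiveRoot (ζ i) (p ^ (k + 1))) (hinj : ζ.Injective)
    (i j : Fin (φ (p ^ (k + 1)))) : ‖(vandermonde ζ)⁻¹ i j‖ ≤ 2 := by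
  have hn : p ^ (k + 1) ≠ 0 := pow_ne_zero _ hp.ne_zero
  have hE (a b : Fin (φ (p ^ (k + 1)))) :
      ‖(1 + modEqMatrix ℂ (p ^ k) (φ (p ^ (k + 1)))) a b‖ ≤ 2 := by
    rw [Matrix.add_apply, Matrix.one_apply, modEqMatrix, of_apply]
    split_ifs <;> norm_num
  have hVH (a b : Fin (φ (p ^ (k + 1)))) : ‖(vandermonde ζ)ᴴ a b‖ ≤ 1 := by
    simp [vandermonde_apply, (hζ b).norm'_eq_one hn]
  have hφ : (φ (p ^ (k + 1)) : ℝ) ≤ p ^ (k + 1) := by exact_mod_cast Nat.totient_le _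
  rw [inv_vandermonde_prime_pow hp hζ hinj, Matrix.smul_apply, norm_smul, norm_inv, norm_pow,
    Complex.norm_natCast]
  have hp0 : (0 : ℝ) < p := by exact_mod_cast hp.pos
  calc _ ≤ ((p : ℝ) ^ (k + 1))⁻¹ * (φ (p ^ (k + 1)) * (2 * 1)) := by
        gcongr
        simpa only [Fintype.card_fin] using norm_mul_apply_le hE hVH i j
    _ ≤ ((p : ℝ) ^ (k + 1))⁻¹ * ((p : ℝ) ^ (k + 1) * 2) := by gcongr; linarith
    _ = 2 := inv_mul_cancel_left₀ (by positivity) 2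

end PrimePower

theorem condNum_vandermonde_prime_pow (p k : ℕ) (hp : Nat.Prime p)
    (n : ℕ) (hn : n = p ^ k) (hn2 : 2 ≤ n)
    (ζ : Fin n.totient → ℂ) (hζ : ∀ i, IsPrimitiveRoot (ζ i) n)
    (hinj : Function.Injective ζ) :
    condNum (Matrix.of fun i j : Fin n.totient => ζ i ^ (j : ℕ)) ≤
      4 * (n.totient : ℝ) ^ 2 := by
  subst hn
  obtain ⟨k, rfl⟩ := Nat.exists_eq_add_one_of_ne_zero (by rintro rfl; simp at hn2 : k ≠ 0)
  have hcard : √(Fintype.card (Fin (φ (p ^ (k + 1)))) * Fintype.card (Fin (φ (p ^ (k + 1))))) =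
      φ (p ^ (k + 1)) := by
    rw [Fintype.card_fin, Real.sqrt_mul_self (Nat.cast_nonneg _)]
  have hV : frobNorm (vandermonde ζ) ≤ φ (p ^ (k + 1)) := by
    refine (frobNorm_le_of_norm_le (c := 1) fun i j => ?_).trans_eq (by rw [hcard, mul_one])
    simp [vandermonde_apply, (hζ i).norm'_eq_one (pow_ne_zero _ hp.ne_zero)]
  have hVinv : frobNorm (vandermonde ζ)⁻¹ ≤ φ (p ^ (k + 1)) * 2 :=
    (frobNorm_le_of_norm_le (norm_inv_vandermonde_prime_pow_apply_le hp hζ hinj)).trans_eq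
      (by rw [hcard])
  calc frobNorm (vandermonde ζ) * frobNorm (vandermonde ζ)⁻¹
      ≤ φ (p ^ (k + 1)) * (φ (p ^ (k + 1)) * 2) :=
        mul_le_mul hV hVinv (Real.sqrt_nonneg _) (Nat.cast_nonneg _)
    _ ≤ 4 * (φ (p ^ (k + 1)) : ℝ) ^ 2 := by nlinarith [sq_nonneg (φ (p ^ (k + 1)) : ℝ)]
end
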